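/- If g lies in the k-th derived group F^{(k)} of the free group F(ℛ[t, t⁻¹]) = ⟨M₁, M₂T⟩ for k ≥ 2, and g is written as a polynomial g = M_g + (t-1)A₁ + (t-1)²A₂ + ⋯ in (t-1) with matrix coefficients over ℛ, then M_g = I and Aᵢ = 0 for i < 2^{k-2}, and Aᵢ ∈ Σ^{2^{k-2}} (entrywise) for all i ≥ 2^{k-2}. -/

import Mathlib

open Matrix Finset

noncomputable section

/-- The Laurent polynomial ring `ℛ = ℤ[x, x⁻¹, y, y⁻¹]`, realized as the group
algebra of `ℤ × ℤ` over `ℤ`. -/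
abbrev R2 : Type := AddMonoidAlgebra ℤ (ℤ × ℤ)

/-- The positive units `x^i y^j` of `ℛ`, as a homomorphism from `ℤ × ℤ`. -/
def U : Multiplicative (ℤ × ℤ) →* R2ˣ :=
  (Units.map (AddMonoidAlgebra.of ℤ (ℤ × ℤ))).comp toUnits.toMonoidHom

/-- `x` as a unit of `ℛ`. -/
def xu : R2ˣ := U (Multiplicative.ofAdd (1, 0))
/-- `y` as a unit of `ℛ`. -/
def yu : R2ˣ := U (Multiplicative.ofAdd (0, 1))
/-- `x ∈ ℛ`. -/
def Xr : R2 := xu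
/-- `y ∈ ℛ`. -/
def Yr : R2 := yu

/-- The augmentation map `ℛ → ℤ`, `x, y ↦ 1`. -/
def aug : R2 →+* ℤ := ((AddMonoidAlgebra.lift ℤ ℤ (ℤ × ℤ)) 1).toRingHom

/-- The augmentation ideal `Σ` of `ℛ`. -/
def Saug : Ideal R2 := RingHom.ker aug

/-- The `n`-cyclotomic ideal `𝒥(n)` of `ℛ`, generated by `1 + u + ⋯ + u^(n-1)` for
positive units `u`. -/
def Cyc (n : ℕ) : Ideal R2 :=
  Ideal.span {r | ∃ m : Multiplicative (ℤ × ℤ), r = ∑ i ∈ Finset.range n, ((U m : R2)) ^ i}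

/-- The matrix `M₁`. -/
def M1 : Matrix (Fin 2) (Fin 2) R2 := !![1, 1 - Yr; 0, Xr]
/-- The matrix `M₂`. -/
def M2 : Matrix (Fin 2) (Fin 2) R2 := !![Yr, 0; 1 - Xr, 1]

/-- The matrix `[λᵢ v]` with rows `λᵢ • (1-x, 1-y)`. -/
def Nmat (a b : R2) : Matrix (Fin 2) (Fin 2) R2 :=
  !![a * (1 - Xr), a * (1 - Yr); b * (1 - Xr), b * (1 - Yr)]

/-- The row vector `v = (1-x, 1-y)`. -/
def vv : Fin 2 → R2 := ![1 - Xr, 1 - Yr]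

end

/-- The ring `ℛ[t, t⁻¹]`, as Laurent polynomials over `ℛ`. -/
abbrev RT : Type := LaurentPolynomial R2

noncomputable section

/-- `x ∈ ℛ[t, t⁻¹]`. -/
def Xt : RT := LaurentPolynomial.C Xr
/-- `y ∈ ℛ[t, t⁻¹]`. -/
def Yt : RT := LaurentPolynomial.C Yr
/-- `t ∈ ℛ[t, t⁻¹]`. -/
def tL : RT := LaurentPolynomial.T 1

/-- The matrix `M₁` over `ℛ[t, t⁻¹]`. -/
def M1T : Matrix (Fin 2) (Fin 2) RT := !![1, 1 - Yt; 0, Xt]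
/-- The matrix `M₂` over `ℛ[t, t⁻¹]`. -/
def M2T : Matrix (Fin 2) (Fin 2) RT := !![Yt, 0; 1 - Xt, 1]
/-- The matrix `T`. -/
def Tm : Matrix (Fin 2) (Fin 2) RT := !![tL, 0; 1 - tL, 1]

/-- `t = 1 + (t - 1)` as a unit of the power series ring `ℛ[[t-1]]`
(whose variable `X` plays the role of `t - 1`). -/
def uPS : (PowerSeries R2)ˣ :=
  ((PowerSeries.isUnit_iff_constantCoeff (φ := 1 + PowerSeries.X)).mpr (by simp)).unit

/-- The power series expansion `ℛ[t, t⁻¹] → ℛ[[t-1]]`, the ring homomorphism sending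
`t` to `1 + X` (where `X` stands for `t - 1`); the coefficient of `X^i` in the image of
`f` is the coefficient `Aᵢ` of `(t-1)^i` in the expansion of `f` in powers of `t - 1`. -/
def phi : RT →+* PowerSeries R2 :=
  ((AddMonoidAlgebra.lift R2 (PowerSeries R2) ℤ)
    ((Units.coeHom (PowerSeries R2)).comp (zpowersHom (PowerSeries R2)ˣ uPS))).toRingHom

/-- The derived series of a subgroup `H` of an ambient group, as subgroups of the
ambient group: `derivedSub H 0 = H`, `derivedSub H (k+1) = [derivedSub H k, derivedSub H k]`. -/
def derivedSub {G : Type*} [Group G] (H : Subgroup G) : ℕ → Subgroup G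
  | 0 => H
  | k + 1 => ⁅derivedSub H k, derivedSub H k⁆

end

/-!
Expand in powers of `t - 1`, i.e. map `GL₂(ℛ[t, t⁻¹])` to `GL₂(ℛ⟦X⟧)` by `t ↦ 1 + X`. Let `J_N`
(`PowerSeries.filtration Σ N`) be the ideal of power series divisible by `X ^ N` with all
coefficients in `Σ ^ N`; the claim says that `g` is congruent to `1` modulo `J_(2^(k-2))`. Now
`J_N J_M ⊆ J_(N+M)`, and the commutator of matrices congruent to `1` modulo ideals `I` and `I'`
is congruent to `1` modulo `I I'`. So it suffices to show that `F''` is congruent to `1` modulo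
`J_1`, the level doubling with each further derived step.

At `x = y = 1` the matrix `M₁` becomes trivial, so `F` maps to a cyclic group and `F'` is
congruent to `1` modulo `Σ`. At `t = 1` the generators fix the row `v = (1 - x, 1 - y)` and have
`u = (1 - y, x - 1)` as an eigenvector, so commutators also fix `u`. Matrices `1 + D` of this
last kind commute, because `v D = 0` forces `D` to be of rank one with column space spanned by
`u`, whence `D D' = 0`. Hence `F''` is congruent to `1` modulo `X` as well.
-/

open scoped commutatorElement PowerSeries

section DerivedSeries

variable {G G' : Type*} [Group G] [Group G']

lemma derivedSub_succ_le (H : Subgroup G) (k : ℕ) : derivedSub H (k + 1) ≤ derivedSub H k :=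
  Subgroup.commutator_le_self _

lemma map_derivedSub (f : G →* G') (H : Subgroup G) :
    ∀ k, (derivedSub H k).map f = derivedSub (H.map f) k
  | 0 => rfl
  | k + 1 => by
    rw [derivedSub, derivedSub, Subgroup.map_commutator, map_derivedSub f H k]

lemma derivedSub_succ_le_ker {f : G →* G'} {H : Subgroup G} {A : Subgroup G'} {k : ℕ}
    (hA : derivedSub (H.map f) k ≤ A) (hcomm : ∀ a ∈ A, ∀ b ∈ A, Commute a b) :
    derivedSub H (k + 1) ≤ f.ker := by
  rw [← Subgroup.map_eq_bot_iff, map_derivedSub, eq_bot_iff]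
  refine Subgroup.commutator_le.2 fun a ha b hb => ?_
  rw [Subgroup.mem_bot, commutatorElement_eq_one_iff_commute]
  exact hcomm a (hA ha) b (hA hb)

lemma commutator_comap_le (f : G →* G') (K K' : Subgroup G') :
    ⁅K.comap f, K'.comap f⁆ ≤ ⁅K, K'⁆.comap f := by
  rw [← Subgroup.map_le_iff_le_comap, Subgroup.map_commutator]
  exact Subgroup.commutator_mono (Subgroup.map_comap_le _ _) (Subgroup.map_comap_le _ _)

end DerivedSeries

section CongruenceSubgroup

lemma mul_apply_mem_mul {n S : Type*} [Fintype n] [CommRing S] {I J : Ideal S}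
    {P Q : Matrix n n S} (hP : ∀ i j, P i j ∈ I) (hQ : ∀ i j, Q i j ∈ J) (i j : n) :
    (P * Q) i j ∈ I * J :=
  sum_mem fun c _ => Ideal.mul_mem_mul (hP i c) (hQ c j)

variable {n S T : Type*} [Fintype n] [DecidableEq n] [CommRing S] [CommRing T]

lemma mem_ker_map_iff {f : S →+* T} {g : GL n S} :
    g ∈ (GeneralLinearGroup.map f).ker ↔ ∀ i j, ((g : Matrix n n S) - 1) i j ∈ RingHom.ker f := by
  rw [MonoidHom.mem_ker, Units.ext_iff, GeneralLinearGroup.val_map_apply, Units.val_one,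
    ← sub_eq_zero, ← Matrix.map_one f (map_zero f) (map_one f), ← Matrix.map_sub f (map_sub f)]
  simp only [RingHom.mem_ker, ← Matrix.ext_iff, Matrix.map_apply, Matrix.zero_apply]

def congrSubgroup (J : Ideal S) : Subgroup (GL n S) :=
  (GeneralLinearGroup.map (Ideal.Quotient.mk J)).ker

lemma mem_congrSubgroup {J : Ideal S} {g : GL n S} :
    g ∈ congrSubgroup J ↔ ∀ i j, ((g : Matrix n n S) - 1) i j ∈ J := by
  rw [congrSubgroup, mem_ker_map_iff, Ideal.mk_ker]

lemma ker_map_eq_congrSubgroup (f : S →+* T) :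
    (GeneralLinearGroup.map f).ker = congrSubgroup (n := n) (RingHom.ker f) := by
  ext g
  rw [mem_ker_map_iff, mem_congrSubgroup]

lemma ker_map_comp_eq_comap_congrSubgroup {A : Type*} [CommRing A] (φ : A →+* S) (f : S →+* T) :
    (GeneralLinearGroup.map (n := n) (f.comp φ)).ker =
      (congrSubgroup (RingHom.ker f)).comap (GeneralLinearGroup.map φ) := by
  rw [GeneralLinearGroup.map_comp, ← MonoidHom.comap_ker, ker_map_eq_congrSubgroup]

lemma congrSubgroup_mono {J J' : Ideal S} (h : J ≤ J') :
    congrSubgroup (n := n) J ≤ congrSubgroup J' :=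
  fun _ hg => mem_congrSubgroup.2 fun i j => h (mem_congrSubgroup.1 hg i j)

lemma congrSubgroup_inf (J J' : Ideal S) :
    congrSubgroup (n := n) J ⊓ congrSubgroup J' = congrSubgroup (J ⊓ J') := by
  ext g
  simp only [Subgroup.mem_inf, mem_congrSubgroup, Ideal.mem_inf, forall_and]

lemma commutator_congrSubgroup_le (J J' : Ideal S) :
    ⁅congrSubgroup (n := n) J, congrSubgroup (n := n) J'⁆ ≤ congrSubgroup (n := n) (J * J') := by
  refine Subgroup.commutator_le.2 fun g hg h hh => mem_congrSubgroup.2 ?_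
  rw [mem_congrSubgroup] at hg hh
  set A := (g : Matrix n n S)
  set B := (h : Matrix n n S)
  set A' := ((g⁻¹ : GL n S) : Matrix n n S)
  set B' := ((h⁻¹ : GL n S) : Matrix n n S)
  have key : ((⁅g, h⁆ : GL n S) : Matrix n n S) - 1 =
      ((A - 1) * (B - 1) - (B - 1) * (A - 1)) * (A' * B') := by
    calc ((⁅g, h⁆ : GL n S) : Matrix n n S) - 1 = A * B * (A' * B') - B * (A * A') * B' := by
          rw [g.mul_inv, mul_one, h.mul_inv]
          simp only [A, B, A', B', commutatorElement_def, Units.val_mul, mul_assoc]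
      _ = _ := by noncomm_ring
  have hbracket : ∀ i j, ((A - 1) * (B - 1) - (B - 1) * (A - 1)) i j ∈ J * J' := fun i j =>
    sub_mem (mul_apply_mem_mul hg hh i j) (mul_comm J' J ▸ mul_apply_mem_mul hh hg i j)
  intro i j
  rw [key, ← Ideal.mul_top (J * J')]
  exact mul_apply_mem_mul hbracket (fun _ _ => Submodule.mem_top) i j

lemma derivedSub_add_le_comap_congrSubgroup {G : Type*} [Group G] {H : Subgroup G}
    {ρ : G →* GL n S} {J : Ideal S} {j : ℕ} (h : derivedSub H j ≤ (congrSubgroup J).comap ρ) :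
    ∀ k, derivedSub H (j + k) ≤ (congrSubgroup (J ^ 2 ^ k)).comap ρ
  | 0 => by simpa using h
  | k + 1 => by
    have ih := derivedSub_add_le_comap_congrSubgroup h k
    calc derivedSub H (j + (k + 1))
        = ⁅derivedSub H (j + k), derivedSub H (j + k)⁆ := rfl
      _ ≤ ⁅(congrSubgroup (J ^ 2 ^ k)).comap ρ, (congrSubgroup (J ^ 2 ^ k)).comap ρ⁆ :=
          Subgroup.commutator_mono ih ih
      _ ≤ ⁅congrSubgroup (J ^ 2 ^ k), congrSubgroup (J ^ 2 ^ k)⁆.comap ρ :=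
          commutator_comap_le _ _ _
      _ ≤ (congrSubgroup (J ^ 2 ^ k * J ^ 2 ^ k)).comap ρ :=
          Subgroup.comap_mono (commutator_congrSubgroup_le _ _)
      _ = (congrSubgroup (J ^ 2 ^ (k + 1))).comap ρ := by rw [pow_succ, pow_mul, sq]

end CongruenceSubgroup

namespace PowerSeries

variable {R T : Type*} [CommRing R] [CommRing T]

def filtration (I : Ideal R) (N : ℕ) : Ideal R⟦X⟧ where
  carrier := {f | X ^ N ∣ f ∧ ∀ i, coeff i f ∈ I ^ N}
  zero_mem' := ⟨dvd_zero _, fun i => by simp⟩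
  add_mem' hf hg := ⟨dvd_add hf.1 hg.1, fun i => by rw [map_add]; exact add_mem (hf.2 i) (hg.2 i)⟩
  smul_mem' c f hf := ⟨Dvd.dvd.mul_left hf.1 c, fun i => by
    rw [smul_eq_mul, coeff_mul]
    exact sum_mem fun p _ => Ideal.mul_mem_left _ _ (hf.2 p.2)⟩

lemma filtration_mul_le (I : Ideal R) (N M : ℕ) :
    filtration I N * filtration I M ≤ filtration I (N + M) :=
  Ideal.mul_le.2 fun f hf g hg => ⟨pow_add (X : R⟦X⟧) N M ▸ mul_dvd_mul hf.1 hg.1, fun i => by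
    rw [coeff_mul, pow_add]
    exact sum_mem fun p _ => Ideal.mul_mem_mul (hf.2 p.1) (hg.2 p.2)⟩

lemma filtration_one_pow_le (I : Ideal R) : ∀ m, filtration I 1 ^ m ≤ filtration I m
  | 0 => by
    rw [pow_zero, Ideal.one_eq_top, top_le_iff, eq_top_iff]
    exact fun f _ => ⟨by simp, fun i => by simp⟩
  | m + 1 => by
    rw [pow_succ]
    exact (Ideal.mul_mono_left (filtration_one_pow_le I m)).trans (filtration_mul_le I m 1)

lemma ker_constantCoeff_inf_ker_map_le (f : R →+* T) :
    RingHom.ker (constantCoeff (R := R)) ⊓ RingHom.ker (map f) ≤ filtration (RingHom.ker f) 1 :=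
  fun p ⟨h0, hf⟩ => ⟨by simpa [X_dvd_iff] using h0, fun i => by
    simpa [RingHom.mem_ker] using congrArg (coeff i) (RingHom.mem_ker.1 hf)⟩

lemma coeff_of_sub_C_mem_filtration {I : Ideal R} {N : ℕ} {p : R⟦X⟧} {r : R}
    (hN : 1 ≤ N) (h : p - C r ∈ filtration I N) :
    coeff 0 p = r ∧ (∀ i, 1 ≤ i → i < N → coeff i p = 0) ∧ ∀ i, N ≤ i → coeff i p ∈ I ^ N := by
  obtain ⟨hdvd, hcoeff⟩ := h
  have hlow := X_pow_dvd_iff.1 hdvd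
  have hC : ∀ i, 1 ≤ i → coeff i p = coeff i (p - C r) := fun i hi => by
    rw [map_sub, coeff_C, if_neg (by omega), sub_zero]
  refine ⟨?_, fun i hi hiN => (hC i hi).trans (hlow i hiN), fun i hi => hC i (by omega) ▸ hcoeff i⟩
  simpa [sub_eq_zero] using hlow 0 hN

end PowerSeries

section Stabilizers

variable {n R : Type*} [Fintype n] [DecidableEq n] [CommRing R]

def rowStabilizer (v : n → R) : Subgroup (GL n R) where
  carrier := {C | v ᵥ* (C : Matrix n n R) = v}
  one_mem' := vecMul_one v
  mul_mem' {C C'} hC hC' := by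
    change v ᵥ* _ = v
    rw [Units.val_mul, ← vecMul_vecMul, hC, hC']
  inv_mem' {C} hC := by
    change v ᵥ* _ = v
    conv_lhs => rw [← hC, vecMul_vecMul, Units.mul_inv, vecMul_one]

lemma mem_rowStabilizer {v : n → R} {C : GL n R} :
    C ∈ rowStabilizer v ↔ v ᵥ* (C : Matrix n n R) = v :=
  Iff.rfl

def columnStabilizer (u : n → R) : Subgroup (GL n R) where
  carrier := {C | (C : Matrix n n R) *ᵥ u = u}
  one_mem' := one_mulVec u
  mul_mem' {C C'} hC hC' := by
    change _ *ᵥ u = u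
    rw [Units.val_mul, ← mulVec_mulVec, hC', hC]
  inv_mem' {C} hC := by
    change _ *ᵥ u = u
    conv_lhs => rw [← hC, mulVec_mulVec, Units.inv_mul, one_mulVec]

lemma inv_mulVec_eq_smul {C : GL n R} {u : n → R} {r : Rˣ} (h : (C : Matrix n n R) *ᵥ u = r • u) :
    (↑C⁻¹ : Matrix n n R) *ᵥ u = r⁻¹ • u := by
  rw [eq_inv_smul_iff, ← mulVec_smul, ← h, mulVec_mulVec, Units.inv_mul, one_mulVec]

def columnLineStabilizer (u : n → R) : Subgroup (GL n R) where
  carrier := {C | ∃ r : Rˣ, (C : Matrix n n R) *ᵥ u = r • u}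
  one_mem' := ⟨1, by simp⟩
  mul_mem' := by
    rintro C C' ⟨r, hr⟩ ⟨r', hr'⟩
    exact ⟨r * r', by rw [Units.val_mul, ← mulVec_mulVec, hr', mulVec_smul, hr, smul_smul, mul_comm]⟩
  inv_mem' := by
    rintro C ⟨r, hr⟩
    exact ⟨r⁻¹, inv_mulVec_eq_smul hr⟩

lemma commutator_columnLineStabilizer_le (u : n → R) :
    ⁅columnLineStabilizer u, columnLineStabilizer u⁆ ≤ columnStabilizer u := by
  refine Subgroup.commutator_le.2 ?_
  rintro C ⟨r, hr⟩ C' ⟨r', hr'⟩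
  change ((⁅C, C'⁆ : GL n R) : Matrix n n R) *ᵥ u = u
  simp only [commutatorElement_def, Units.val_mul, ← mulVec_mulVec, inv_mulVec_eq_smul hr,
    inv_mulVec_eq_smul hr', mulVec_smul, hr, hr', smul_smul]
  rw [mul_comm r' r, inv_mul_cancel_left, inv_mul_cancel, one_smul]

end Stabilizers

section TwoByTwo

variable {R : Type*} [CommRing R]

lemma smul_eq_vecMulVec_of_vecMul_eq_zero {a b : R} {D : Matrix (Fin 2) (Fin 2) R}
    (hD : ![a, b] ᵥ* D = 0) : b • D = vecMulVec ![b, -a] (D 0) := by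
  ext i j
  have hj := congrFun hD j
  simp only [vecMul, dotProduct, Fin.sum_univ_two, Pi.zero_apply, cons_val_zero,
    cons_val_one] at hj
  fin_cases i
  · simp [vecMulVec_apply]
  · simp only [Fin.mk_one, Matrix.smul_apply, smul_eq_mul, vecMulVec_apply, cons_val_one,
      cons_val_fin_one, neg_mul]
    linear_combination hj

variable [IsDomain R]

lemma mul_eq_zero_of_mulVec_eq_zero_of_vecMul_eq_zero {a b : R} (hb : b ≠ 0)
    {D D' : Matrix (Fin 2) (Fin 2) R} (hD : D *ᵥ ![b, -a] = 0) (hD' : ![a, b] ᵥ* D' = 0) :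
    D * D' = 0 := by
  have h : b • (D * D') = 0 := by
    rw [← mul_smul_comm, smul_eq_vecMulVec_of_vecMul_eq_zero hD', mul_vecMulVec, hD,
      zero_vecMulVec]
  exact (smul_eq_zero.1 h).resolve_left hb

lemma commute_of_mem_rowStabilizer_inf_columnStabilizer {a b : R} (hb : b ≠ 0)
    {C C' : GL (Fin 2) R} (hC : C ∈ rowStabilizer ![a, b] ⊓ columnStabilizer ![b, -a])
    (hC' : C' ∈ rowStabilizer ![a, b] ⊓ columnStabilizer ![b, -a]) : Commute C C' := by
  have sub_one_annihilates : ∀ {C : GL (Fin 2) R},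
      C ∈ rowStabilizer ![a, b] ⊓ columnStabilizer ![b, -a] →
      ((C : Matrix (Fin 2) (Fin 2) R) - 1) *ᵥ ![b, -a] = 0 ∧
        ![a, b] ᵥ* ((C : Matrix (Fin 2) (Fin 2) R) - 1) = 0 := fun ⟨hrow, hcol⟩ =>
    ⟨by rw [sub_mulVec, one_mulVec, hcol, sub_self], by rw [vecMul_sub, vecMul_one, hrow, sub_self]⟩
  obtain ⟨hDu, hvD⟩ := sub_one_annihilates hC
  obtain ⟨hD'u, hvD'⟩ := sub_one_annihilates hC'
  have h₁ := mul_eq_zero_of_mulVec_eq_zero_of_vecMul_eq_zero hb hDu hvD'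
  have h₂ := mul_eq_zero_of_mulVec_eq_zero_of_vecMul_eq_zero hb hD'u hvD
  refine Units.ext ?_
  calc (C : Matrix (Fin 2) (Fin 2) R) * C'
      = ((C : Matrix (Fin 2) (Fin 2) R) - 1) * (C' - 1) + C + C' - 1 := by noncomm_ring
    _ = ((C' : Matrix (Fin 2) (Fin 2) R) - 1) * (C - 1) + C' + C - 1 := by
        rw [h₁, h₂]; abel
    _ = C' * C := by noncomm_ring

end TwoByTwo

lemma Yr_ne_one : Yr ≠ 1 := by
  intro h
  rw [Yr, yu, U, AddMonoidAlgebra.one_def] at h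
  simp only [MonoidHom.comp_apply, Units.coe_map, AddMonoidAlgebra.of_apply] at h
  simpa using (AddMonoidAlgebra.single_left_inj one_ne_zero).1 h

lemma aug_Xr : aug Xr = 1 := by
  simp [aug, Xr, xu, U, AddMonoidAlgebra.of_apply]

lemma aug_Yr : aug Yr = 1 := by
  simp [aug, Yr, yu, U, AddMonoidAlgebra.of_apply]

lemma phi_C (r : R2) : phi (LaurentPolynomial.C r) = PowerSeries.C r := by
  change AddMonoidAlgebra.lift _ _ _ _ (AddMonoidAlgebra.single 0 r) = _
  rw [AddMonoidAlgebra.lift_single, ofAdd_zero, map_one, PowerSeries.smul_eq_C_mul, mul_one]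

lemma phi_tL : phi tL = 1 + PowerSeries.X := by
  change AddMonoidAlgebra.lift R2 (PowerSeries R2) ℤ _ (AddMonoidAlgebra.single (1 : ℤ) (1 : R2)) = _
  rw [AddMonoidAlgebra.lift_single, one_smul]
  simp only [MonoidHom.comp_apply, zpowersHom_apply, toAdd_ofAdd, zpow_one, Units.coeHom_apply]
  exact IsUnit.unit_spec _

noncomputable def evalOne : RT →+* R2 := PowerSeries.constantCoeff.comp phi

noncomputable def augExpansion : RT →+* PowerSeries ℤ := (PowerSeries.map aug).comp phi

lemma evalOne_C (r : R2) : evalOne (LaurentPolynomial.C r) = r := by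
  rw [evalOne, RingHom.comp_apply, phi_C, PowerSeries.constantCoeff_C]

lemma evalOne_tL : evalOne tL = 1 := by
  rw [evalOne, RingHom.comp_apply, phi_tL, map_add, map_one, PowerSeries.constantCoeff_X, add_zero]

lemma augExpansion_C (r : R2) : augExpansion (LaurentPolynomial.C r) = PowerSeries.C (aug r) := by
  rw [augExpansion, RingHom.comp_apply, phi_C, PowerSeries.map_C]

lemma map_M1T_evalOne : M1T.map evalOne = M1 := by
  ext i j : 1
  fin_cases i <;> fin_cases j <;> simp [M1T, M1, Xt, Yt, evalOne_C]

lemma map_M2T_evalOne : M2T.map evalOne = M2 := by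
  ext i j : 1
  fin_cases i <;> fin_cases j <;> simp [M2T, M2, Xt, Yt, evalOne_C]

lemma map_Tm_evalOne : Tm.map evalOne = 1 := by
  ext i j : 1
  fin_cases i <;> fin_cases j <;> simp [Tm, evalOne_tL]

lemma map_M1T_augExpansion : M1T.map augExpansion = 1 := by
  ext i j : 1
  fin_cases i <;> fin_cases j <;> simp [M1T, Xt, Yt, augExpansion_C, aug_Xr, aug_Yr]

lemma vv_vecMul_M1 : vv ᵥ* M1 = vv := by
  ext j : 1
  fin_cases j
  · simp [vv, M1, vecMul, dotProduct, Fin.sum_univ_two]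
  · simp only [vv, M1, vecMul, dotProduct, Fin.sum_univ_two, of_apply, cons_val', cons_val_zero,
      cons_val_one, cons_val_fin_one, Fin.mk_one]
    ring

lemma vv_vecMul_M2 : vv ᵥ* M2 = vv := by
  ext j : 1
  fin_cases j
  · simp only [vv, M2, vecMul, dotProduct, Fin.sum_univ_two, of_apply, cons_val', cons_val_zero,
      cons_val_one, cons_val_fin_one, Fin.zero_eta]
    ring
  · simp [vv, M2, vecMul, dotProduct, Fin.sum_univ_two]

lemma M1_mulVec : M1 *ᵥ ![1 - Yr, -(1 - Xr)] = xu • ![1 - Yr, -(1 - Xr)] := by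
  ext i : 1
  fin_cases i
  · simp only [M1, Xr, mulVec, dotProduct, Fin.sum_univ_two, of_apply, cons_val', cons_val_zero,
      cons_val_one, cons_val_fin_one, Fin.zero_eta, Pi.smul_apply, Units.smul_def, smul_eq_mul]
    ring
  · simp [M1, Xr, Units.smul_def, mulVec, dotProduct, Fin.sum_univ_two]

lemma M2_mulVec : M2 *ᵥ ![1 - Yr, -(1 - Xr)] = yu • ![1 - Yr, -(1 - Xr)] := by
  ext i : 1
  fin_cases i
  · simp [M2, Yr, Units.smul_def, mulVec, dotProduct, Fin.sum_univ_two]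
  · simp only [M2, Yr, mulVec, dotProduct, Fin.sum_univ_two, of_apply, cons_val', cons_val_zero,
      cons_val_one, cons_val_fin_one, Fin.mk_one, Pi.smul_apply, Units.smul_def, smul_eq_mul]
    ring

section GeneratedSubgroup

variable {m1 m2t : GL (Fin 2) RT}

lemma derivedSub_one_le_ker_augExpansion (h1 : (m1 : Matrix (Fin 2) (Fin 2) RT) = M1T) :
    derivedSub (Subgroup.closure {m1, m2t}) 1 ≤ (GeneralLinearGroup.map augExpansion).ker := by
  set w := GeneralLinearGroup.map augExpansion m2t
  have hm1 : GeneralLinearGroup.map augExpansion m1 = 1 :=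
    Units.ext (by rw [GeneralLinearGroup.val_map_apply, h1]; exact map_M1T_augExpansion)
  refine derivedSub_succ_le_ker (A := Subgroup.zpowers w) ?_ ?_
  · rw [derivedSub, MonoidHom.map_closure, Set.image_pair, hm1, Subgroup.closure_le,
      Set.insert_subset_iff, Set.singleton_subset_iff]
    exact ⟨one_mem _, Subgroup.mem_zpowers w⟩
  · rintro _ ⟨i, rfl⟩ _ ⟨j, rfl⟩
    exact Commute.zpow_zpow_self w i j

lemma derivedSub_two_le_ker_evalOne (h1 : (m1 : Matrix (Fin 2) (Fin 2) RT) = M1T)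
    (h2 : (m2t : Matrix (Fin 2) (Fin 2) RT) = M2T * Tm) :
    derivedSub (Subgroup.closure {m1, m2t}) 2 ≤ (GeneralLinearGroup.map evalOne).ker := by
  set u : Fin 2 → R2 := ![1 - Yr, -(1 - Xr)]
  have himage : (Subgroup.closure {m1, m2t}).map (GeneralLinearGroup.map evalOne) ≤
      rowStabilizer vv ⊓ columnLineStabilizer u := by
    rw [MonoidHom.map_closure, Set.image_pair, Subgroup.closure_le, Set.insert_subset_iff,
      Set.singleton_subset_iff]
    have hm1 : (GeneralLinearGroup.map evalOne m1 : Matrix (Fin 2) (Fin 2) R2) = M1 := by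
      rw [GeneralLinearGroup.val_map_apply, h1, map_M1T_evalOne]
    have hm2t : (GeneralLinearGroup.map evalOne m2t : Matrix (Fin 2) (Fin 2) R2) = M2 := by
      rw [GeneralLinearGroup.val_map_apply, h2, Matrix.map_mul, map_M2T_evalOne, map_Tm_evalOne,
        mul_one]
    exact ⟨⟨mem_rowStabilizer.2 (hm1 ▸ vv_vecMul_M1), xu, hm1 ▸ M1_mulVec⟩,
      ⟨mem_rowStabilizer.2 (hm2t ▸ vv_vecMul_M2), yu, hm2t ▸ M2_mulVec⟩⟩
  refine derivedSub_succ_le_ker (k := 1) (A := rowStabilizer vv ⊓ columnStabilizer u) ?_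
    fun C hC C' hC' => commute_of_mem_rowStabilizer_inf_columnStabilizer
      (sub_ne_zero.2 Yr_ne_one.symm) hC hC'
  refine (Subgroup.commutator_mono himage himage).trans (le_inf ?_ ?_)
  · exact (Subgroup.commutator_mono inf_le_left inf_le_left).trans (Subgroup.commutator_le_self _)
  · exact (Subgroup.commutator_mono inf_le_right inf_le_right).trans
      (commutator_columnLineStabilizer_le u)

lemma derivedSub_two_le_comap_congrSubgroup (h1 : (m1 : Matrix (Fin 2) (Fin 2) RT) = M1T)
    (h2 : (m2t : Matrix (Fin 2) (Fin 2) RT) = M2T * Tm) :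
    derivedSub (Subgroup.closure {m1, m2t}) 2 ≤
      (congrSubgroup (PowerSeries.filtration Saug 1)).comap (GeneralLinearGroup.map phi) := by
  intro g hg
  have hev : g ∈ (GeneralLinearGroup.map evalOne).ker := derivedSub_two_le_ker_evalOne h1 h2 hg
  have haug : g ∈ (GeneralLinearGroup.map augExpansion).ker :=
    derivedSub_one_le_ker_augExpansion h1 (derivedSub_succ_le _ 1 hg)
  rw [evalOne, ker_map_comp_eq_comap_congrSubgroup] at hev
  rw [augExpansion, ker_map_comp_eq_comap_congrSubgroup] at haug
  have hboth : GeneralLinearGroup.map phi g ∈ congrSubgroup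
      (RingHom.ker (PowerSeries.constantCoeff (R := R2)) ⊓ RingHom.ker (PowerSeries.map aug)) := by
    rw [← congrSubgroup_inf]
    exact ⟨hev, haug⟩
  exact congrSubgroup_mono (PowerSeries.ker_constantCoeff_inf_ker_map_le aug) hboth

end GeneratedSubgroup

/-- If `g ∈ F⁽ᵏ⁾`, the `k`-th derived group of `F(ℛ[t, t⁻¹]) = ⟨M₁, M₂T⟩` (`k ≥ 2`), and
`g = M_g + (t-1)A₁ + (t-1)²A₂ + ⋯` is its expansion in powers of `t - 1`, then `M_g = I`,
`Aᵢ = 0` for `i < 2^(k-2)`, and `Aᵢ ∈ Σ^(2^(k-2))` entrywise for all `i ≥ 2^(k-2)`. -/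
theorem derived_series_coefficients
    (m1 m2t : (Matrix (Fin 2) (Fin 2) RT)ˣ)
    (h1 : (m1 : Matrix (Fin 2) (Fin 2) RT) = M1T)
    (h2 : (m2t : Matrix (Fin 2) (Fin 2) RT) = M2T * Tm)
    (k : ℕ) (hk : 2 ≤ k)
    (g : (Matrix (Fin 2) (Fin 2) RT)ˣ)
    (hg : g ∈ derivedSub (Subgroup.closure {m1, m2t}) k) :
    (∀ a b : Fin 2,
        PowerSeries.coeff (R := R2) 0 (phi ((g : Matrix (Fin 2) (Fin 2) RT) a b)) =
          (1 : Matrix (Fin 2) (Fin 2) R2) a b) ∧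
    (∀ i : ℕ, 1 ≤ i → i < 2 ^ (k - 2) → ∀ a b : Fin 2,
        PowerSeries.coeff (R := R2) i (phi ((g : Matrix (Fin 2) (Fin 2) RT) a b)) = 0) ∧
    (∀ i : ℕ, 2 ^ (k - 2) ≤ i → ∀ a b : Fin 2,
        PowerSeries.coeff (R := R2) i (phi ((g : Matrix (Fin 2) (Fin 2) RT) a b)) ∈
          Saug ^ (2 ^ (k - 2))) := by
  have hlevel : GeneralLinearGroup.map phi g ∈
      congrSubgroup (PowerSeries.filtration Saug (2 ^ (k - 2))) := by
    have hk' := derivedSub_add_le_comap_congrSubgroup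
      (derivedSub_two_le_comap_congrSubgroup h1 h2) (k - 2)
    rw [Nat.add_sub_cancel' hk] at hk'
    exact congrSubgroup_mono (PowerSeries.filtration_one_pow_le _ _) (hk' hg)
  have hentry (a b : Fin 2) := PowerSeries.coeff_of_sub_C_mem_filtration Nat.one_le_two_pow <| by
    have := mem_congrSubgroup.1 hlevel a b
    rwa [Matrix.sub_apply, GeneralLinearGroup.map_apply,
      ← Matrix.map_one PowerSeries.C (map_zero _) (map_one _), Matrix.map_apply] at this
  exact ⟨fun a b => (hentry a b).1, fun i hi hiN a b => (hentry a b).2.1 i hi hiN,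
    fun i hi a b => (hentry a b).2.2 i hi⟩
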